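/- arXiv:0710.3574 — 3 statements merged into one kernel-verified Lean document; each statement's English description precedes it below -/
import Mathlib

section
/- Let K be a field and let (z_m)_{m∈ℤ} be a sequence of nonzero elements satisfying z_{m+1} z_{m-1} = z_m + 1 for all m (the rank-2 cluster recurrence of type A_2). Then the sequence is periodic with period 5: z_{m+5} = z_m for all m. -/
/-! Five consecutive applications of the exchange relation `z_{m+1} z_{m-1} = z_m + 1` combine
into `(z_{m+5} - z_m) z_{m+3} z_{m+2} = 0`, so the sequence returns after five steps as soon as
the two middle terms can be cancelled. -/

theorem eq_of_pentagon_exchange {R : Type*} [CommRing R] [NoZeroDivisors R] {a b c d e f : R}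
    (hc : c ≠ 0) (hd : d ≠ 0) (habc : c * a = b + 1) (hbcd : d * b = c + 1)
    (hcde : e * c = d + 1) (hdef : f * d = e + 1) : f = a :=
  mul_right_cancel₀ (mul_ne_zero hd hc) <| by
    linear_combination c * hdef + hcde - d * habc - hbcd

theorem exchange_two_steps {R : Type*} [Ring R] {z : ℤ → R}
    (hrec : ∀ m : ℤ, z (m + 1) * z (m - 1) = z m + 1) (m k : ℤ) :
    z (m + (k + 2)) * z (m + k) = z (m + (k + 1)) + 1 := by
  convert hrec (m + (k + 1)) using 3 <;> ring

/-- Pentagon (Zamolodchikov) periodicity in type `A₂`: a sequence of nonzero field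
    elements with `z_{m+1} z_{m-1} = z_m + 1` is periodic of period `5`. -/
theorem stmt_8 (K : Type*) [Field K] (z : ℤ → K)
    (hz : ∀ m : ℤ, z m ≠ 0)
    (hrec : ∀ m : ℤ, z (m + 1) * z (m - 1) = z m + 1) :
    ∀ m : ℤ, z (m + 5) = z m := by
  intro m
  have step := exchange_two_steps hrec m
  have h₀ := step 0
  have h₁ := step 1
  have h₂ := step 2
  have h₃ := step 3
  norm_num at h₀ h₁ h₂ h₃
  exact eq_of_pentagon_exchange (hz _) (hz _) h₀ h₁ h₂ h₃
end

section
/- Let K be a field and let (z_m)_{m∈ℤ} be nonzero elements satisfying the alternating rank-2 recurrence z_{m+1} z_{m-1} = z_m² + 1 if m is even and z_{m+1} z_{m-1} = z_m + 1 if m is odd. Then the sequence is periodic with period 6: z_{m+6} = z_m for all m. -/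
/-!
From `(x₀, x₁)` the exchange relations force
`x₂ = (x₁ + 1) / x₀`, `x₃ = ((x₁ + 1)² + x₀²) / (x₀² x₁)`, `x₄ = (x₀² + x₁ + 1) / (x₀ x₁)`,
`x₅ = (x₀² + 1) / x₁`, and then `x₆ = x₀`, `x₇ = x₁`. Since an even-indexed pair of the sequence
is such a starting pair, `z (n + 6) = z n` and `z (n + 7) = z (n + 1)` for every even `n`, which
covers both parities of the index.
-/

theorem b2_exchange_six_steps {K : Type*} [Field K] {x₀ x₁ x₂ x₃ x₄ x₅ x₆ x₇ : K}
    (h₀ : x₀ ≠ 0) (h₁ : x₁ ≠ 0) (h₂ : x₂ ≠ 0) (h₃ : x₃ ≠ 0) (h₄ : x₄ ≠ 0) (h₅ : x₅ ≠ 0)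
    (e₁ : x₂ * x₀ = x₁ + 1) (e₂ : x₃ * x₁ = x₂ ^ 2 + 1) (e₃ : x₄ * x₂ = x₃ + 1)
    (e₄ : x₅ * x₃ = x₄ ^ 2 + 1) (e₅ : x₆ * x₄ = x₅ + 1) (e₆ : x₇ * x₅ = x₆ ^ 2 + 1) :
    x₆ = x₀ ∧ x₇ = x₁ := by
  have hx₃ : x₃ * x₁ * x₀ ^ 2 = (x₁ + 1) ^ 2 + x₀ ^ 2 := by
    linear_combination x₀ ^ 2 * e₂ + (x₂ * x₀ + x₁ + 1) * e₁
  have hx₄ : x₄ * x₁ * x₀ = x₁ + 1 + x₀ ^ 2 := by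
    refine mul_left_cancel₀ (e₁ ▸ mul_ne_zero h₂ h₀ : x₁ + 1 ≠ 0) ?_
    linear_combination (x₁ * x₀ ^ 2) * e₃ - (x₄ * x₁ * x₀) * e₁ + hx₃
  have hx₅ : x₅ * x₁ = x₀ ^ 2 + 1 := by
    refine mul_left_cancel₀ (by positivity : x₃ * x₁ * x₀ ^ 2 ≠ 0) ?_
    linear_combination (x₁ ^ 2 * x₀ ^ 2) * e₄ + (x₄ * x₁ * x₀ + x₁ + 1 + x₀ ^ 2) * hx₄ -
      (x₀ ^ 2 + 1) * hx₃
  have hx₆ : x₆ = x₀ := by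
    refine mul_left_cancel₀ (by positivity : x₄ * x₁ * x₀ ≠ 0) ?_
    linear_combination (x₁ * x₀) * e₅ + x₀ * hx₅ - x₀ * hx₄
  refine ⟨hx₆, mul_left_cancel₀ h₅ ?_⟩
  linear_combination e₆ + (x₆ + x₀) * hx₆ - hx₅

theorem b2_recurrence_period_six_of_even {K : Type*} [Field K] {z : ℤ → K}
    (hz : ∀ m, z m ≠ 0)
    (heven : ∀ m : ℤ, Even m → z (m + 1) * z (m - 1) = z m ^ 2 + 1)
    (hodd : ∀ m : ℤ, Odd m → z (m + 1) * z (m - 1) = z m + 1) {n : ℤ} (hn : Even n) :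
    z (n + 6) = z n ∧ z (n + 7) = z (n + 1) := by
  have exchange_odd (k : ℤ) (hk : Even k) : z (k + 2) * z k = z (k + 1) + 1 := by
    simpa only [add_assoc, add_sub_cancel_right, Int.reduceAdd] using hodd (k + 1) hk.add_one
  have exchange_even (k : ℤ) (hk : Even k) : z (k + 3) * z (k + 1) = z (k + 2) ^ 2 + 1 := by
    simpa only [add_assoc, add_sub_assoc, Int.reduceAdd, Int.reduceSub] using
      heven (k + 2) (hk.add even_two)
  have hn₂ : Even (n + 2) := hn.add even_two
  have hn₄ : Even (n + 4) := hn.add (by decide)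
  have e₃ := exchange_odd _ hn₂
  have e₄ := exchange_even _ hn₂
  have e₅ := exchange_odd _ hn₄
  have e₆ := exchange_even _ hn₄
  simp only [add_assoc, Int.reduceAdd] at e₃ e₄ e₅ e₆
  exact b2_exchange_six_steps (hz _) (hz _) (hz _) (hz _) (hz _) (hz _)
    (exchange_odd n hn) (exchange_even n hn) e₃ e₄ e₅ e₆

/-- Period `6` for the rank-2 cluster recurrence of type `B₂ = C₂`. -/
theorem stmt_9 (K : Type*) [Field K] (z : ℤ → K)
    (hz : ∀ m : ℤ, z m ≠ 0)
    (heven : ∀ m : ℤ, Even m → z (m + 1) * z (m - 1) = z m ^ 2 + 1)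
    (hodd : ∀ m : ℤ, Odd m → z (m + 1) * z (m - 1) = z m + 1) :
    ∀ m : ℤ, z (m + 6) = z m := by
  intro m
  rcases Int.even_or_odd m with hm | hm
  · exact (b2_recurrence_period_six_of_even hz heven hodd hm).1
  · convert (b2_recurrence_period_six_of_even hz heven hodd (hm.sub_odd odd_one)).2 using 2 <;>
      ring
end

section
/- Frieze periodicity for type A_n: let (d_{i,j}) be an array over a field satisfying the diamond rule d_{i,j+1} d_{i,j-1} = d_{i-1,j} d_{i+1,j} + 1 for all 1 ≤ i ≤ n (indices j ∈ ℤ), with boundary conditions d_{0,j} = 1 and d_{n+1,j} = 1 for all j, and all entries nonzero. Then the array is periodic in j with period dividing 2(n+3): d_{i, j+2(n+3)} = d_{i,j}; moreover the glide symmetry d_{i, j+n+3} = d_{n+1-i, j} holds. -/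
/-!
Along each diagonal `(i + k, j - k)` of a frieze the ratio
`(d (i - 1) j + d (i + 1) (j + 2)) / d i (j + 1)` is constant: two neighbouring diamond rules
make the cross-multiplied difference vanish. At the two ends of the diagonal the diamond rule
against a boundary row of `1`s turns this ratio into a single entry, which gives
`d 1 (j + n + 3) = d n j`. The diamond rule then propagates this glide symmetry from row to
row, and applying the glide twice gives the period `2 (n + 3)`.
-/

section

variable {K : Type*} [Field K]

def DiamondRule (d : ℤ → ℤ → K) (i j : ℤ) : Prop :=
  d i (j + 1) * d i (j - 1) = d (i - 1) j * d (i + 1) j + 1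

structure IsFrieze (n : ℤ) (d : ℤ → ℤ → K) : Prop where
  ne_zero : ∀ i j, 0 ≤ i → i ≤ n + 1 → d i j ≠ 0
  top : ∀ j, d 0 j = 1
  bot : ∀ j, d (n + 1) j = 1
  diamond : ∀ i j, 1 ≤ i → i ≤ n → DiamondRule d i j

def diagRatio (d : ℤ → ℤ → K) (i j : ℤ) : K :=
  (d (i - 1) j + d (i + 1) (j + 2)) / d i (j + 1)

theorem diagRatio_succ_pred {d : ℤ → ℤ → K} {i j : ℤ} (hA : DiamondRule d i j)
    (hB : DiamondRule d (i + 1) (j + 1)) (h₁ : d i (j + 1) ≠ 0) (h₂ : d (i + 1) j ≠ 0) :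
    diagRatio d (i + 1) (j - 1) = diagRatio d i j := by
  unfold DiamondRule at hA hB
  simp only [add_sub_cancel_right, add_assoc, one_add_one_eq_two] at hB
  unfold diagRatio
  simp only [add_sub_cancel_right, sub_add_cancel, add_assoc, one_add_one_eq_two]
  rw [show j - 1 + 2 = j + 1 by ring, div_eq_div_iff h₂ h₁]
  linear_combination hA - hB

namespace IsFrieze

variable {n : ℤ} {d : ℤ → ℤ → K}

theorem diagRatio_one (h : IsFrieze n d) (hn : 1 ≤ n) (j : ℤ) :
    diagRatio d 1 j = d 1 (j + 3) := by
  have hD := h.diamond 1 (j + 2) le_rfl hn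
  unfold DiamondRule at hD
  rw [show j + 2 + 1 = j + 3 by ring, show j + 2 - 1 = j + 1 by ring, sub_self, h.top,
    one_mul] at hD
  unfold diagRatio
  rw [div_eq_iff (h.ne_zero 1 (j + 1) zero_le_one (by omega)), sub_self, h.top]
  linear_combination -hD

theorem diagRatio_last (h : IsFrieze n d) (hn : 1 ≤ n) (j : ℤ) :
    diagRatio d n j = d n (j - 1) := by
  have hD := h.diamond n j hn le_rfl
  unfold DiamondRule at hD
  unfold diagRatio
  rw [h.bot, mul_one] at hD
  rw [div_eq_iff (h.ne_zero n (j + 1) (by omega) (by omega)), h.bot]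
  linear_combination -hD

theorem diagRatio_telescope (h : IsFrieze n d) (j : ℤ) {k : ℤ} (hk₀ : 0 ≤ k)
    (hk : 1 + k ≤ n) : diagRatio d (1 + k) (j - k) = diagRatio d 1 j := by
  induction k, hk₀ using Int.leInduction with
  | base => simp
  | succ k hk₀ ih =>
    rw [show 1 + (k + 1) = 1 + k + 1 by ring, show j - (k + 1) = j - k - 1 by ring,
      diagRatio_succ_pred (h.diamond _ _ (by omega) (by omega))
        (h.diamond _ _ (by omega) (by omega)) (h.ne_zero _ _ (by omega) (by omega))
        (h.ne_zero _ _ (by omega) (by omega)), ih (by omega)]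

theorem glide_row_one (h : IsFrieze n d) (hn : 0 ≤ n) (j : ℤ) :
    d 1 (j + (n + 3)) = d n j := by
  obtain rfl | hn := hn.eq_or_lt
  · rw [h.top, ← zero_add 1, h.bot]
  have key := h.diagRatio_telescope (j + n) (k := n - 1) (by omega) (by omega)
  rw [h.diagRatio_one hn, show 1 + (n - 1) = n by ring, h.diagRatio_last hn] at key
  rw [show j + (n + 3) = j + n + 3 by ring, ← key]
  congr 1; ring

theorem glide (h : IsFrieze n d) (hn : 0 ≤ n) {i : ℤ} (hi₀ : 0 ≤ i) (hi : i ≤ n + 1) (j : ℤ) :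
    d i (j + (n + 3)) = d (n + 1 - i) j := by
  suffices ∀ i, 0 ≤ i → i ≤ n → ∀ j,
      d i (j + (n + 3)) = d (n + 1 - i) j ∧ d (i + 1) (j + (n + 3)) = d (n - i) j by
    obtain rfl | hi := hi.eq_or_lt
    · simpa using (this n hn le_rfl j).2
    · exact (this i hi₀ (by omega) j).1
  intro i hi₀
  induction i, hi₀ using Int.leInduction with
  | base => intro _ j; simpa [h.top, h.bot] using h.glide_row_one hn j
  | succ i hi₀ ih =>
    intro hi j
    refine ⟨(ih (by omega) j).2.trans (by rw [add_sub_add_right_eq_sub]), ?_⟩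
    -- via the glide on rows `i` and `i + 1`, the diamond rule at `(i + 1, j + n + 3)` shares
    -- its left-hand side with the one at `(n - i, j)`
    have hA := h.diamond (i + 1) (j + (n + 3)) (by omega) hi
    have hB := h.diamond (n - i) j (by omega) (by omega)
    unfold DiamondRule at hA hB
    rw [show j + (n + 3) + 1 = j + 1 + (n + 3) by ring,
      show j + (n + 3) - 1 = j - 1 + (n + 3) by ring, add_sub_cancel_right,
      (ih (by omega) _).2, (ih (by omega) _).2, (ih (by omega) _).1, hB,
      show n - i + 1 = n + 1 - i by ring] at hA
    refine (mul_left_cancel₀ (h.ne_zero (n + 1 - i) j (by omega) (by omega)) ?_).symm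
    rw [sub_add_eq_sub_sub]
    linear_combination hA

theorem periodic (h : IsFrieze n d) (hn : 0 ≤ n) {i : ℤ} (hi₀ : 0 ≤ i) (hi : i ≤ n + 1)
    (j : ℤ) : d i (j + 2 * (n + 3)) = d i j := by
  rw [show j + 2 * (n + 3) = j + (n + 3) + (n + 3) by ring, h.glide hn hi₀ hi,
    h.glide hn (by omega) (by omega), sub_sub_cancel]

end IsFrieze

end

/-- Conway–Coxeter frieze periodicity for type `A_n`: an array satisfying the
    diamond rule with boundary rows of `1`s is periodic of period `2(n+3)` and
    satisfies the glide symmetry `d_{i,j+n+3} = d_{n+1-i,j}`. -/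
theorem stmt_15 (n : ℕ) (K : Type*) [Field K] (d : ℤ → ℤ → K)
    (hnz : ∀ i j : ℤ, 0 ≤ i → i ≤ (n : ℤ) + 1 → d i j ≠ 0)
    (htop : ∀ j : ℤ, d 0 j = 1)
    (hbot : ∀ j : ℤ, d ((n : ℤ) + 1) j = 1)
    (hrec : ∀ i j : ℤ, 1 ≤ i → i ≤ (n : ℤ) →
      d i (j + 1) * d i (j - 1) = d (i - 1) j * d (i + 1) j + 1) :
    ∀ i j : ℤ, 0 ≤ i → i ≤ (n : ℤ) + 1 →
      d i (j + ((n : ℤ) + 3)) = d ((n : ℤ) + 1 - i) j ∧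
      d i (j + 2 * ((n : ℤ) + 3)) = d i j := by
  have h : IsFrieze (n : ℤ) d := ⟨hnz, htop, hbot, hrec⟩
  intro i j hi₀ hi
  exact ⟨h.glide n.cast_nonneg hi₀ hi j, h.periodic n.cast_nonneg hi₀ hi j⟩
end
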